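/- arXiv:2205.06659 — 4 statements merged into one kernel-verified Lean document; each statement's English description precedes it below -/
import Mathlib

section
/- Let B ∈ ℝ³ be constant, S the skew-symmetric matrix with Sv = v × B, A(x) = -½ x × B, and suppose U is differentiable with U(e^{τS}x) = U(x) for all τ. Then the momentum M(x,v) = (v + A(x))ᵀ S x is constant along any solution of ẍ = ẋ × B - ∇U(x). -/
open Matrix NormedSpace

/-- The skew-symmetric matrix `S` with `S v = v × B`. -/
def tildeB (B : Fin 3 → ℝ) : Matrix (Fin 3) (Fin 3) ℝ :=
  !![0, B 2, -(B 1); -(B 2), 0, B 0; B 1, -(B 0), 0]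

theorem momentum_conservation
    (B : Fin 3 → ℝ) (S : Matrix (Fin 3) (Fin 3) ℝ)
    (hS : ∀ v : Fin 3 → ℝ, S.mulVec v = v ⨯₃ B)
    (A : (Fin 3 → ℝ) → Fin 3 → ℝ)
    (hA : ∀ x, A x = -((1/2 : ℝ) • (x ⨯₃ B)))
    (U : (Fin 3 → ℝ) → ℝ) (hU : Differentiable ℝ U)
    (g : (Fin 3 → ℝ) → Fin 3 → ℝ)
    (hg : ∀ x y, fderiv ℝ U x y = g x ⬝ᵥ y)
    (hinv : ∀ (τ : ℝ) (x : Fin 3 → ℝ), U ((exp (τ • S)).mulVec x) = U x)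
    (x v : ℝ → Fin 3 → ℝ)
    (hx : ∀ t, HasDerivAt x (v t) t)
    (hv : ∀ t, HasDerivAt v ((v t) ⨯₃ B - g (x t)) t) :
    ∀ t : ℝ, (v t + A (x t)) ⬝ᵥ S.mulVec (x t) = (v 0 + A (x 0)) ⬝ᵥ S.mulVec (x 0) := by
  -- Key fact from the symmetry: g y ⬝ᵥ (y ⨯₃ B) = 0.
  have hkey : ∀ y : Fin 3 → ℝ, g y ⬝ᵥ (y ⨯₃ B) = 0 := by
    intro y
    letI : NormedRing (Matrix (Fin 3) (Fin 3) ℝ) := Matrix.linftyOpNormedRing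
    letI : NormedAlgebra ℝ (Matrix (Fin 3) (Fin 3) ℝ) := Matrix.linftyOpNormedAlgebra
    haveI : CompleteSpace (Matrix (Fin 3) (Fin 3) ℝ) := FiniteDimensional.complete ℝ _
    have h1 : HasDerivAt (fun τ : ℝ => exp (τ • S)) S 0 := by
      have := hasDerivAt_exp_smul_const (𝕂 := ℝ) S 0
      simp [exp_zero] at this
      exact this
    let Lm : Matrix (Fin 3) (Fin 3) ℝ →ₗ[ℝ] (Fin 3 → ℝ) :=
      { toFun := fun M => M.mulVec y
        map_add' := fun M N => Matrix.add_mulVec M N y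
        map_smul' := fun c M => Matrix.smul_mulVec c M y }
    have h2 : HasDerivAt (fun τ : ℝ => (exp (τ • S)).mulVec y) (S.mulVec y) 0 := by
      have := (Lm.toContinuousLinearMap.hasFDerivAt
          (x := exp ((0:ℝ) • S))).comp_hasDerivAt 0 h1
      simp [Lm, Function.comp, LinearMap.coe_toContinuousLinearMap'] at this
      exact this
    have h3 : HasDerivAt (fun τ : ℝ => U ((exp (τ • S)).mulVec y))
        (fderiv ℝ U y (S.mulVec y)) 0 := by
      have hUy : HasFDerivAt U (fderiv ℝ U y) ((exp ((0:ℝ) • S)).mulVec y) := by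
        simpa [exp_zero] using (hU y).hasFDerivAt
      exact hUy.comp_hasDerivAt 0 h2
    have h4 : HasDerivAt (fun τ : ℝ => U ((exp (τ • S)).mulVec y)) 0 0 := by
      have heq : (fun τ : ℝ => U ((exp (τ • S)).mulVec y)) = fun _ => U y :=
        funext fun τ => hinv τ y
      rw [heq]; exact hasDerivAt_const 0 _
    have h5 := h3.unique h4
    rw [hg] at h5
    rw [← hS]
    exact h5
  -- component derivatives
  have hxi : ∀ (i : Fin 3) (t : ℝ), HasDerivAt (fun t => x t i) (v t i) t :=
    fun i t => hasDerivAt_pi.1 (hx t) i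
  have hvi : ∀ (i : Fin 3) (t : ℝ),
      HasDerivAt (fun t => v t i) ((v t ⨯₃ B - g (x t)) i) t :=
    fun i t => hasDerivAt_pi.1 (hv t) i
  have hM : ∀ t, HasDerivAt (fun t => (v t + A (x t)) ⬝ᵥ S.mulVec (x t)) 0 t := by
    intro t
    have hc0 : HasDerivAt (fun t => x t 1 * B 2 - x t 2 * B 1)
        (v t 1 * B 2 - v t 2 * B 1) t := ((hxi 1 t).mul_const _).sub ((hxi 2 t).mul_const _)
    have hc1 : HasDerivAt (fun t => x t 2 * B 0 - x t 0 * B 2)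
        (v t 2 * B 0 - v t 0 * B 2) t := ((hxi 2 t).mul_const _).sub ((hxi 0 t).mul_const _)
    have hc2 : HasDerivAt (fun t => x t 0 * B 1 - x t 1 * B 0)
        (v t 0 * B 1 - v t 1 * B 0) t := ((hxi 0 t).mul_const _).sub ((hxi 1 t).mul_const _)
    have hf0 := ((hvi 0 t).sub (hc0.const_mul (1/2 : ℝ))).mul hc0
    have hf1 := ((hvi 1 t).sub (hc1.const_mul (1/2 : ℝ))).mul hc1
    have hf2 := ((hvi 2 t).sub (hc2.const_mul (1/2 : ℝ))).mul hc2
    have H := (hf0.add hf1).add hf2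
    have key := hkey (x t)
    simp only [cross_apply, dotProduct, Fin.sum_univ_three, Matrix.cons_val_zero,
      Matrix.cons_val_one, Matrix.head_cons, Matrix.cons_val_two, Matrix.tail_cons,
      Pi.sub_apply] at key H ⊢
    convert H using 2 with t
    · rfl
    · rfl
    · simp only [hA, hS, cross_apply, dotProduct, Fin.sum_univ_three,
        Matrix.cons_val_zero, Matrix.cons_val_one, Matrix.head_cons, Matrix.cons_val_two,
        Matrix.tail_cons, Pi.add_apply, Pi.neg_apply, Pi.smul_apply, smul_eq_mul,
        Pi.mul_apply, Pi.sub_apply]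
      ring
    · linear_combination key
  have hdiff : Differentiable ℝ (fun t => (v t + A (x t)) ⬝ᵥ S.mulVec (x t)) :=
    fun t => (hM t).differentiableAt
  intro t
  exact is_const_of_deriv_eq_zero hdiff (fun s => (hM s).deriv) t 0
end

section
/- For any smooth curve z : ℝ → ℝ³, constant vector B ∈ ℝ³, and k ≥ 1: żᵀ (z^{(2k+1)} × B) = d/dt [ Σ_{j=1}^{k-1} (-1)^{j+1} (z^{(j)})ᵀ (z^{(2k+1-j)} × B) + (-1)^{k+1} (z^{(k)})ᵀ (z^{(k+1)} × B) ]. -/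
open Matrix

private lemma hasDerivAt_dot_cross {f g : ℝ → Fin 3 → ℝ} {f' g' : Fin 3 → ℝ} {t : ℝ}
    (hf : HasDerivAt f f' t) (hg : HasDerivAt g g' t) (B : Fin 3 → ℝ) :
    HasDerivAt (fun s => f s ⬝ᵥ (g s ⨯₃ B)) (f' ⬝ᵥ (g t ⨯₃ B) + f t ⬝ᵥ (g' ⨯₃ B)) t := by
  have hfi : ∀ i, HasDerivAt (fun s => f s i) (f' i) t := fun i => hasDerivAt_pi.mp hf i
  have hgi : ∀ i, HasDerivAt (fun s => g s i) (g' i) t := fun i => hasDerivAt_pi.mp hg i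
  simp only [dotProduct, cross_apply, Fin.sum_univ_three, Matrix.cons_val_zero,
    Matrix.cons_val_one, Matrix.head_cons, Matrix.cons_val_two, Matrix.tail_cons]
  exact ((((hfi 0).fun_mul (((hgi 1).mul_const (B 2)).fun_sub ((hgi 2).mul_const (B 1)))).fun_add
      ((hfi 1).fun_mul (((hgi 2).mul_const (B 0)).fun_sub ((hgi 0).mul_const (B 2))))).fun_add
      ((hfi 2).fun_mul (((hgi 0).mul_const (B 1)).fun_sub ((hgi 1).mul_const (B 0))))).congr_deriv (by ring)

private lemma hasDerivAt_iteratedDeriv' {z : ℝ → Fin 3 → ℝ} (hz : ContDiff ℝ (⊤ : ℕ∞) z) (j : ℕ)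
    (t : ℝ) : HasDerivAt (iteratedDeriv j z) (iteratedDeriv (j + 1) z t) t := by
  have h := (hz.differentiable_iteratedDeriv j (by exact_mod_cast ENat.coe_lt_top j)).differentiableAt (x := t)
  rw [iteratedDeriv_succ]
  exact h.hasDerivAt

private lemma telescope (c : ℕ → ℝ) (n : ℕ) :
    ∑ j ∈ Finset.Icc 1 n, (-1 : ℝ) ^ (j + 1) * (c (j + 1) + c j) =
      c 1 + (-1 : ℝ) ^ (n + 1) * c (n + 1) := by
  induction n with
  | zero => simp
  | succ n ih =>
    rw [Finset.sum_Icc_succ_top (by omega), ih]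
    simp [pow_succ]
    ring

theorem dot_odd_deriv_cross_is_total_derivative
    (z : ℝ → Fin 3 → ℝ) (hz : ContDiff ℝ (⊤ : ℕ∞) z) (B : Fin 3 → ℝ) (k : ℕ) (hk : 1 ≤ k) :
    ∀ t : ℝ,
      iteratedDeriv 1 z t ⬝ᵥ (iteratedDeriv (2 * k + 1) z t ⨯₃ B) =
        deriv (fun s =>
          (∑ j ∈ Finset.Icc 1 (k - 1),
              (-1 : ℝ) ^ (j + 1) *
                (iteratedDeriv j z s ⬝ᵥ (iteratedDeriv (2 * k + 1 - j) z s ⨯₃ B))) +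
            (-1 : ℝ) ^ (k + 1) *
              (iteratedDeriv k z s ⬝ᵥ (iteratedDeriv (k + 1) z s ⨯₃ B))) t := by
  intro t
  have hd : ∀ j : ℕ, HasDerivAt (iteratedDeriv j z) (iteratedDeriv (j + 1) z t) t :=
    fun j => hasDerivAt_iteratedDeriv' hz j t
  have hD : HasDerivAt (fun s =>
      (∑ j ∈ Finset.Icc 1 (k - 1),
          (-1 : ℝ) ^ (j + 1) *
            (iteratedDeriv j z s ⬝ᵥ (iteratedDeriv (2 * k + 1 - j) z s ⨯₃ B))) +
        (-1 : ℝ) ^ (k + 1) *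
          (iteratedDeriv k z s ⬝ᵥ (iteratedDeriv (k + 1) z s ⨯₃ B)))
      ((∑ j ∈ Finset.Icc 1 (k - 1),
          (-1 : ℝ) ^ (j + 1) *
            (iteratedDeriv (j + 1) z t ⬝ᵥ (iteratedDeriv (2 * k + 1 - j) z t ⨯₃ B) +
              iteratedDeriv j z t ⬝ᵥ (iteratedDeriv (2 * k + 1 - j + 1) z t ⨯₃ B))) +
        (-1 : ℝ) ^ (k + 1) *
          (iteratedDeriv (k + 1) z t ⬝ᵥ (iteratedDeriv (k + 1) z t ⨯₃ B) +
            iteratedDeriv k z t ⬝ᵥ (iteratedDeriv (k + 1 + 1) z t ⨯₃ B))) t := by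
    exact (HasDerivAt.fun_sum fun j _ =>
        (hasDerivAt_dot_cross (hd j) (hd (2 * k + 1 - j)) B).const_mul _).fun_add
      ((hasDerivAt_dot_cross (hd k) (hd (k + 1)) B).const_mul _)
  rw [hD.deriv]
  have key := telescope
    (fun j => iteratedDeriv j z t ⬝ᵥ (iteratedDeriv (2 * k + 2 - j) z t ⨯₃ B)) (k - 1)
  have hk1 : k - 1 + 1 = k := by omega
  rw [hk1] at key
  have hsum_eq : (∑ j ∈ Finset.Icc 1 (k - 1),
      (-1 : ℝ) ^ (j + 1) *
        (iteratedDeriv (j + 1) z t ⬝ᵥ (iteratedDeriv (2 * k + 1 - j) z t ⨯₃ B) +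
          iteratedDeriv j z t ⬝ᵥ (iteratedDeriv (2 * k + 1 - j + 1) z t ⨯₃ B))) =
      ∑ j ∈ Finset.Icc 1 (k - 1),
      (-1 : ℝ) ^ (j + 1) *
        ((fun j => iteratedDeriv j z t ⬝ᵥ (iteratedDeriv (2 * k + 2 - j) z t ⨯₃ B)) (j + 1) +
          (fun j => iteratedDeriv j z t ⬝ᵥ (iteratedDeriv (2 * k + 2 - j) z t ⨯₃ B)) j) := by
    refine Finset.sum_congr rfl fun j hj => ?_
    simp only [Finset.mem_Icc] at hj
    have h1 : 2 * k + 2 - (j + 1) = 2 * k + 1 - j := by omega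
    have h2 : 2 * k + 1 - j + 1 = 2 * k + 2 - j := by omega
    simp only [h1, h2]
  rw [hsum_eq, key]
  simp only [dot_self_cross, zero_add]
  have h3 : 2 * k + 2 - 1 = 2 * k + 1 := by omega
  have h4 : 2 * k + 2 - k = k + 1 + 1 := by omega
  rw [h3, h4]
  have h5 : (-1 : ℝ) ^ (k + 1) = -(-1 : ℝ) ^ k := by rw [pow_succ]; ring
  rw [h5]
  ring
end

section
/- Let Q be a symmetric n×n real matrix and q ∈ ℝⁿ. For any smooth curve z : ℝ → ℝⁿ and k ≥ 1: (z^{(2k+1)})ᵀ(Qz + q) = d/dt [ (z^{(2k)})ᵀ(Qz+q) - (z^{(2k-1)})ᵀ Q ż + ⋯ + ((-1)^k/2)(z^{(k)})ᵀ Q z^{(k)} ], i.e. (z^{(2k+1)})ᵀ(Qz+q) is a total time derivative of an expression in z and its derivatives up to order 2k. -/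
open Matrix

private lemma my_hasDerivAt_iter {n : ℕ} {z : ℝ → Fin n → ℝ} (hz : ContDiff ℝ (⊤ : ℕ∞) z)
    (m : ℕ) (t : ℝ) : HasDerivAt (iteratedDeriv m z) (iteratedDeriv (m + 1) z t) t := by
  rw [iteratedDeriv_succ]
  exact ((hz.differentiable_iteratedDeriv m (by exact_mod_cast ENat.natCast_lt_top m)).differentiableAt).hasDerivAt

private lemma my_hasDerivAt_dotQ {n : ℕ} (Q : Matrix (Fin n) (Fin n) ℝ)
    {f g : ℝ → Fin n → ℝ} {f' g' : Fin n → ℝ} {t : ℝ}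
    (hf : HasDerivAt f f' t) (hg : HasDerivAt g g' t) :
    HasDerivAt (fun s => f s ⬝ᵥ Q.mulVec (g s))
      (f' ⬝ᵥ Q.mulVec (g t) + f t ⬝ᵥ Q.mulVec g') t := by
  have hf' := hasDerivAt_pi.1 hf
  have hg' := hasDerivAt_pi.1 hg
  have h1 : ∀ i : Fin n, HasDerivAt (fun s => f s i * (Q.mulVec (g s)) i)
      (f' i * (Q.mulVec (g t)) i + f t i * (Q.mulVec g') i) t := by
    intro i
    have hm : HasDerivAt (fun s => (Q.mulVec (g s)) i) ((Q.mulVec g') i) t := by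
      simp only [Matrix.mulVec, dotProduct]
      exact HasDerivAt.fun_sum fun l _ => ((hg' l).const_mul (Q i l))
    exact (hf' i).mul hm
  have h2 := HasDerivAt.fun_sum (fun i (_ : i ∈ Finset.univ) => h1 i)
  simpa [dotProduct, Finset.sum_add_distrib] using h2

private lemma my_hasDerivAt_dotConst {n : ℕ} (q : Fin n → ℝ)
    {f : ℝ → Fin n → ℝ} {f' : Fin n → ℝ} {t : ℝ}
    (hf : HasDerivAt f f' t) :
    HasDerivAt (fun s => f s ⬝ᵥ q) (f' ⬝ᵥ q) t := by
  have hf' := hasDerivAt_pi.1 hf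
  have h2 := HasDerivAt.fun_sum (fun i (_ : i ∈ Finset.univ) => (hf' i).mul_const (q i))
  simpa [dotProduct] using h2

private lemma my_telescope (g : ℕ → ℝ) (m : ℕ) :
    ∑ j ∈ Finset.Icc 1 m, (g j - g (j + 1)) = g 1 - g (m + 1) := by
  induction m with
  | zero => simp
  | succ m ih =>
    rw [Finset.sum_Icc_succ_top (by omega), ih]
    ring

theorem odd_deriv_dot_quadratic_gradient_is_total_derivative
    {n : ℕ} (Q : Matrix (Fin n) (Fin n) ℝ) (hQ : Qᵀ = Q) (q : Fin n → ℝ)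
    (z : ℝ → Fin n → ℝ) (hz : ContDiff ℝ (⊤ : ℕ∞) z) (k : ℕ) (hk : 1 ≤ k) :
    ∀ t : ℝ,
      iteratedDeriv (2 * k + 1) z t ⬝ᵥ (Q.mulVec (z t) + q) =
        deriv (fun s =>
          (iteratedDeriv (2 * k) z s ⬝ᵥ (Q.mulVec (z s) + q)) +
          (∑ j ∈ Finset.Icc 1 (k - 1),
              (-1 : ℝ) ^ j *
                (iteratedDeriv (2 * k - j) z s ⬝ᵥ Q.mulVec (iteratedDeriv j z s))) +
            ((-1 : ℝ) ^ k / 2) *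
              (iteratedDeriv k z s ⬝ᵥ Q.mulVec (iteratedDeriv k z s))) t := by
  intro t
  have hsym : ∀ u v : Fin n → ℝ, u ⬝ᵥ Q.mulVec v = v ⬝ᵥ Q.mulVec u := by
    intro u v
    rw [Matrix.dotProduct_mulVec, ← Matrix.mulVec_transpose, hQ, dotProduct_comm]
  set D : ℕ → Fin n → ℝ := fun m => iteratedDeriv m z t with hD
  set A : ℕ → ℝ := fun j => D (2 * k - j + 1) ⬝ᵥ Q.mulVec (D j) with hA
  -- derivative of the first piece
  have hd0 : HasDerivAt (fun s => iteratedDeriv (2 * k) z s ⬝ᵥ (Q.mulVec (z s) + q))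
      ((D (2 * k + 1) ⬝ᵥ Q.mulVec (D 0) + D (2 * k) ⬝ᵥ Q.mulVec (D 1))
        + D (2 * k + 1) ⬝ᵥ q) t := by
    have hz0 : HasDerivAt z (iteratedDeriv 1 z t) t := by
      have := my_hasDerivAt_iter hz 0 t
      simpa [iteratedDeriv_zero] using this
    have h1 := my_hasDerivAt_dotQ Q (my_hasDerivAt_iter hz (2 * k) t) hz0
    have h2 := my_hasDerivAt_dotConst q (my_hasDerivAt_iter hz (2 * k) t)
    have := h1.fun_add h2
    simp only [dotProduct_add]
    simpa [hD, iteratedDeriv_zero] using this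
  -- derivative of each summand
  have hdsum : HasDerivAt (fun s => ∑ j ∈ Finset.Icc 1 (k - 1),
        (-1 : ℝ) ^ j * (iteratedDeriv (2 * k - j) z s ⬝ᵥ Q.mulVec (iteratedDeriv j z s)))
      (∑ j ∈ Finset.Icc 1 (k - 1), (-1 : ℝ) ^ j * (A j + A (j + 1))) t := by
    refine HasDerivAt.fun_sum (fun j hj => ?_)
    have hj' : 1 ≤ j ∧ j ≤ k - 1 := by simpa [Finset.mem_Icc] using hj
    have hd := my_hasDerivAt_dotQ Q (my_hasDerivAt_iter hz (2 * k - j) t)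
      (my_hasDerivAt_iter hz j t)
    have e1 : 2 * k - j + 1 = 2 * k - j + 1 := rfl
    have e2 : 2 * k - j = 2 * k - (j + 1) + 1 := by omega
    have := hd.const_mul ((-1 : ℝ) ^ j)
    convert this using 2
    · rfl
    simp only [hA, hD]
    rw [e2]
  -- derivative of the last piece
  have hdlast : HasDerivAt (fun s =>
        ((-1 : ℝ) ^ k / 2) * (iteratedDeriv k z s ⬝ᵥ Q.mulVec (iteratedDeriv k z s)))
      (((-1 : ℝ) ^ k / 2) * (D (k + 1) ⬝ᵥ Q.mulVec (D k) + D k ⬝ᵥ Q.mulVec (D (k + 1)))) t :=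
    (my_hasDerivAt_dotQ Q (my_hasDerivAt_iter hz k t) (my_hasDerivAt_iter hz k t)).const_mul _
  have htot := (hd0.fun_add hdsum).fun_add hdlast
  rw [htot.deriv]
  -- now pure algebra
  have htel : ∑ j ∈ Finset.Icc 1 (k - 1), (-1 : ℝ) ^ j * (A j + A (j + 1))
      = -A 1 - (-1 : ℝ) ^ k * A k := by
    have h1 : ∀ j : ℕ, (-1 : ℝ) ^ j * (A j + A (j + 1))
        = ((-1 : ℝ) ^ j * A j) - ((-1 : ℝ) ^ (j + 1) * A (j + 1)) := by
      intro j; rw [pow_succ]; ring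
    simp_rw [h1]
    rw [my_telescope (fun j => (-1 : ℝ) ^ j * A j) (k - 1)]
    have : k - 1 + 1 = k := by omega
    rw [this]
    ring
  have e1 : 2 * k - 1 + 1 = 2 * k := by omega
  have ek : 2 * k - k + 1 = k + 1 := by omega
  have hA1 : D (2 * k) ⬝ᵥ Q.mulVec (D 1) = A 1 := by
    simp only [hA, e1]
  have hAk : D (k + 1) ⬝ᵥ Q.mulVec (D k) = A k := by
    simp only [hA, ek]
  have hAk' : D k ⬝ᵥ Q.mulVec (D (k + 1)) = A k := by rw [hsym, hAk]
  rw [htel, hA1, hAk, hAk']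
  have hz0 : D 0 = z t := by simp [hD, iteratedDeriv_zero]
  rw [dotProduct_add, hz0]
  ring
end

section
/- For the skew-symmetric matrix B̃ with B̃v = v × B (B ∈ ℝ³ constant, B ≠ 0) and any h with cos(h|B|/2) ≠ 0, the Cayley-type identity holds: (2/h)(e^{(h/2)B̃} - e^{-(h/2)B̃})(e^{(h/2)B̃} + e^{-(h/2)B̃})^{-1} = (tan(h|B|/2)/(h|B|/2)) · B̃. -/
/-!
Write `A = B̃` and `c = |B|`. Since `A ^ 3 = -c ^ 2 • A`, the exponential collapses to Rodrigues'
formula `exp (t • A) = 1 + (sin (t c) / c) • A + ((1 - cos (t c)) / c ^ 2) • A ^ 2`: if `R t` is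
the right-hand side, then `A * R t` is the derivative of `R` at `t`, so
`u ↦ exp ((t - u) • A) * R u` has zero derivative and its values at `0` and `t` agree. Consequently `exp (t • A) - exp (-(t • A))` is a multiple of
`A`, while `exp (t • A) + exp (-(t • A))` lies in the commutative plane spanned by `1` and `A ^ 2`,
where it can be inverted explicitly as long as `cos (t c) ≠ 0`; multiplying out with
`A ^ 3 = -c ^ 2 • A` once more leaves `(tan (t c) / c) • A`.
-/

open Matrix NormedSpace

open Real

section Rodrigues

noncomputable def rodrigues {𝔸 : Type*} [Ring 𝔸] [Algebra ℝ 𝔸] (A : 𝔸) (c t : ℝ) : 𝔸 :=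
  1 + (sin (t * c) / c) • A + ((1 - cos (t * c)) / c ^ 2) • A ^ 2

theorem mul_rodrigues {𝔸 : Type*} [Ring 𝔸] [Algebra ℝ 𝔸] {A : 𝔸} {c : ℝ} (hc : c ≠ 0)
    (hA : A ^ 3 = -(c ^ 2 • A)) (t : ℝ) :
    A * rodrigues A c t = cos (t * c) • A + (sin (t * c) / c) • A ^ 2 := by
  have hA' : A * A ^ 2 = -(c ^ 2 • A) := by rw [← pow_succ', hA]
  simp only [rodrigues, mul_add, mul_one, mul_smul_comm, hA', ← sq, smul_neg, smul_smul,
    div_mul_cancel₀ _ (pow_ne_zero 2 hc)]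
  module

variable {𝔸 : Type*} [NormedRing 𝔸] [NormedAlgebra ℝ 𝔸] {A : 𝔸} {c : ℝ}

theorem hasDerivAt_rodrigues (hc : c ≠ 0) (t : ℝ) :
    HasDerivAt (rodrigues A c) (cos (t * c) • A + (sin (t * c) / c) • A ^ 2) t := by
  have hsin : HasDerivAt (fun s => sin (s * c) / c) (cos (t * c)) t := by
    refine ((hasDerivAt_mul_const c).sin.div_const c).congr_deriv ?_
    field_simp
  have hcos : HasDerivAt (fun s => (1 - cos (s * c)) / c ^ 2) (sin (t * c) / c) t := by
    refine (((hasDerivAt_mul_const c).cos.const_sub 1).div_const (c ^ 2)).congr_deriv ?_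
    field_simp
  refine (((hasDerivAt_const t 1).add (hsin.smul_const A)).add
    (hcos.smul_const (A ^ 2))).congr_deriv ?_
  rw [zero_add]

theorem exp_smul_eq_rodrigues [CompleteSpace 𝔸] (hc : c ≠ 0) (hA : A ^ 3 = -(c ^ 2 • A))
    (t : ℝ) :
    exp (t • A) = rodrigues A c t := by
  have hderiv : ∀ s, HasDerivAt (fun u : ℝ => exp ((t - u) • A) * rodrigues A c u) 0 s := by
    intro s
    have hexp := (hasDerivAt_exp_smul_const A (t - s)).scomp s ((hasDerivAt_id s).const_sub t)
    refine (hexp.mul (hasDerivAt_rodrigues hc s)).congr_deriv ?_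
    rw [← mul_rodrigues hc hA, neg_one_smul, neg_mul, mul_assoc]
    exact neg_add_cancel _
  have := is_const_of_deriv_eq_zero (fun s => (hderiv s).differentiableAt)
    (fun s => (hderiv s).deriv) 0 t
  simpa [rodrigues] using this

end Rodrigues

section Cayley

variable {n : Type*} [Fintype n] [DecidableEq n] {A : Matrix n n ℝ} {c t : ℝ}

theorem Matrix.exp_smul_eq_rodrigues (hc : c ≠ 0) (hA : A ^ 3 = -(c ^ 2 • A)) (t : ℝ) :
    exp (t • A) = rodrigues A c t := by
  let := Matrix.linftyOpNormedRing (n := n) (α := ℝ)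
  let := Matrix.linftyOpNormedAlgebra (n := n) (R := ℝ) (α := ℝ)
  exact _root_.exp_smul_eq_rodrigues hc hA t

theorem exp_sub_exp_neg_mul_inv_exp_add_exp_neg (hc : c ≠ 0) (hA : A ^ 3 = -(c ^ 2 • A))
    (hcos : cos (t * c) ≠ 0) :
    (exp (t • A) - exp (-(t • A))) * (exp (t • A) + exp (-(t • A)))⁻¹ =
      (tan (t * c) / c) • A := by
  have hA' : A * A ^ 2 = -(c ^ 2 • A) := by rw [← pow_succ', hA]
  have hA4 : A ^ 2 * A ^ 2 = -(c ^ 2 • A ^ 2) := by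
    rw [← pow_add, show 2 + 2 = 1 + 3 from rfl, pow_add, hA, pow_one, mul_neg, mul_smul_comm,
      ← sq]
  have hexp_neg : exp (-(t • A)) = rodrigues A c (-t) := by
    rw [← neg_smul, Matrix.exp_smul_eq_rodrigues hc hA]
  have hsub : exp (t • A) - exp (-(t • A)) = (2 * sin (t * c) / c) • A := by
    rw [hexp_neg, Matrix.exp_smul_eq_rodrigues hc hA]
    simp only [rodrigues, neg_mul, sin_neg, cos_neg]
    module
  have hadd : exp (t • A) + exp (-(t • A)) =
      (2 : ℝ) • 1 + (2 * (1 - cos (t * c)) / c ^ 2) • A ^ 2 := by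
    rw [hexp_neg, Matrix.exp_smul_eq_rodrigues hc hA]
    simp only [rodrigues, neg_mul, sin_neg, cos_neg]
    module
  have hinv : (exp (t • A) + exp (-(t • A)))⁻¹ =
      (1 / 2 : ℝ) • 1 - ((1 - cos (t * c)) / (2 * c ^ 2 * cos (t * c))) • A ^ 2 := by
    refine inv_eq_right_inv ?_
    rw [hadd]
    simp only [mul_sub, add_mul, smul_mul_assoc, mul_smul_comm, one_mul, mul_one, smul_smul, hA4,
      smul_neg]
    match_scalars <;> field_simp
    ring
  rw [hsub, hinv]
  simp only [mul_sub, smul_mul_assoc, mul_smul_comm, mul_one, smul_smul, hA', smul_neg]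
  rw [tan_eq_sin_div_cos]
  match_scalars
  field_simp
  ring

end Cayley

theorem tildeB_pow_three (B : Fin 3 → ℝ) : tildeB B ^ 3 = -((B ⬝ᵥ B) • tildeB B) := by
  ext i j
  fin_cases i <;> fin_cases j <;>
    simp [tildeB, pow_succ, Matrix.mul_apply, Fin.sum_univ_three, dotProduct] <;> ring

theorem cayley_tangent_identity_general (B : Fin 3 → ℝ) (hB : B ≠ 0) (h : ℝ)
    (hcos : Real.cos (h * Real.sqrt (B ⬝ᵥ B) / 2) ≠ 0) :
    (2 / h) •
        ((exp ((h/2) • tildeB B) - exp (-((h/2) • tildeB B))) *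
          (exp ((h/2) • tildeB B) + exp (-((h/2) • tildeB B)))⁻¹) =
      (Real.tan (h * Real.sqrt (B ⬝ᵥ B) / 2) / (h * Real.sqrt (B ⬝ᵥ B) / 2)) •
        tildeB B := by
  have hpos : 0 < B ⬝ᵥ B := by simpa using dotProduct_star_self_pos_iff.mpr hB
  have hc : √(B ⬝ᵥ B) ≠ 0 := Real.sqrt_ne_zero'.mpr hpos
  have hA : tildeB B ^ 3 = -(√(B ⬝ᵥ B) ^ 2 • tildeB B) := by
    rw [Real.sq_sqrt hpos.le, tildeB_pow_three]
  rw [mul_div_right_comm] at hcos ⊢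
  rw [exp_sub_exp_neg_mul_inv_exp_add_exp_neg hc hA hcos, smul_smul]
  congr 1
  ring

theorem cayley_tangent_identity (B : Fin 3 → ℝ) (hB : B ≠ 0) (h : ℝ) (hh : h ≠ 0)
    (hcos : Real.cos (h * Real.sqrt (B ⬝ᵥ B) / 2) ≠ 0) :
    (2 / h) •
        ((exp ((h/2) • tildeB B) - exp (-((h/2) • tildeB B))) *
          (exp ((h/2) • tildeB B) + exp (-((h/2) • tildeB B)))⁻¹) =
      (Real.tan (h * Real.sqrt (B ⬝ᵥ B) / 2) / (h * Real.sqrt (B ⬝ᵥ B) / 2)) •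
        tildeB B :=
  cayley_tangent_identity_general B hB h hcos
end
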